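/- arXiv:2508.16782 — 2 statements merged into one kernel-verified Lean document; each statement's English description precedes it below -/
import Mathlib

section
/- Let t be a term whose set of variables has k ≥ 0 elements, in a first-order language. Let c₁, …, c_k be pairwise distinct constant symbols, none of which occurs in t. Then there exists a ground instance tθ of t such that tθ is not unifiable with any term s satisfying both: (i) t is not an instance of s, and (ii) none of c₁, …, c_k occurs in s. -/
/-- Terms of a first-order language with function symbols `F` of arities `ar`
(constants are the symbols of arity 0) and variables `V`. -/
inductive Term (F : Type*) (ar : F → ℕ) (V : Type*) where
  | var : V → Term F ar V
  | func : (f : F) → (Fin (ar f) → Term F ar V) → Term F ar V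

/-- Application of a substitution `θ` (a map from variables to terms) to a term. -/
def Term.subst {F : Type*} {ar : F → ℕ} {V : Type*} (θ : V → Term F ar V) :
    Term F ar V → Term F ar V
  | .var v => θ v
  | .func f args => .func f (fun i => (args i).subst θ)

/-- The variable `v` occurs in the term. -/
inductive Term.VarOccurs {F : Type*} {ar : F → ℕ} {V : Type*} (v : V) :
    Term F ar V → Prop
  | var : Term.VarOccurs v (.var v)
  | arg {f : F} {args : Fin (ar f) → Term F ar V} (i : Fin (ar f)) :
      Term.VarOccurs v (args i) → Term.VarOccurs v (.func f args)

/-- The function symbol `g` occurs in the term. -/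
inductive Term.FuncOccurs {F : Type*} {ar : F → ℕ} {V : Type*} (g : F) :
    Term F ar V → Prop
  | head {args : Fin (ar g) → Term F ar V} : Term.FuncOccurs g (.func g args)
  | arg {f : F} {args : Fin (ar f) → Term F ar V} (i : Fin (ar f)) :
      Term.FuncOccurs g (args i) → Term.FuncOccurs g (.func f args)

/-- A term is ground if no variable occurs in it. -/
def Term.Ground {F : Type*} {ar : F → ℕ} {V : Type*} (t : Term F ar V) : Prop :=
  ∀ v : V, ¬ t.VarOccurs v

/-!
Replace the `k` variables of `t` by the fresh constants `c₁, …, c_k` (a skolemization `θ`).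
If `tθ` is unified with `s` by `σ`, then `tθ = sσ` because `tθ` is ground. Turning every `cᵢ`
back into its variable undoes `θ` on `t` and commutes with substitution into terms free of the
`cᵢ`, such as `s`; hence it maps `tθ = sσ` to `t = sσ'`, so `t` is an instance of `s`.
-/

namespace Term

variable {F V : Type*} {ar : F → ℕ}

def const (f : F) (hf : ar f = 0) : Term F ar V :=
  .func f fun i => (i.cast hf).elim0

def abstract (e : F → Option V) : Term F ar V → Term F ar V
  | .var v => .var v
  | .func f args =>
      match e f with
      | some v => .var v
      | none => .func f fun i => (args i).abstract e

theorem subst_eq_self {t : Term F ar V} {θ : V → Term F ar V}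
    (h : ∀ v, t.VarOccurs v → θ v = .var v) : t.subst θ = t := by
  induction t with
  | var v => exact h v .var
  | func f args ih => exact congrArg _ (funext fun i => ih i fun v hv => h v (.arg i hv))

theorem Ground.subst_eq {t : Term F ar V} (ht : t.Ground) (σ : V → Term F ar V) :
    t.subst σ = t :=
  subst_eq_self fun v hv => (ht v hv).elim

theorem ground_subst {t : Term F ar V} {θ : V → Term F ar V}
    (h : ∀ v, t.VarOccurs v → (θ v).Ground) : (t.subst θ).Ground := by
  induction t with
  | var w => exact h w .var
  | func f args ih =>
      rintro v (_ | ⟨i, hv⟩)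
      exact ih i (fun w hw => h w (.arg i hw)) v hv

theorem ground_const (f : F) (hf : ar f = 0) : (const f hf : Term F ar V).Ground := by
  rintro v (_ | ⟨i, -⟩)
  exact (i.cast hf).elim0

theorem abstract_const {e : F → Option V} {f : F} (hf : ar f = 0) {v : V} (he : e f = some v) :
    (const f hf).abstract e = .var v := by
  simp only [const, abstract, he]

theorem abstract_subst {e : F → Option V} {u : Term F ar V}
    (hu : ∀ f, u.FuncOccurs f → e f = none) (σ : V → Term F ar V) :
    (u.subst σ).abstract e = u.subst fun v => (σ v).abstract e := by
  induction u with
  | var v => rfl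
  | func f args ih =>
      simp only [subst, abstract, hu f .head]
      exact congrArg _ (funext fun i => ih i fun g hg => hu g (.arg i hg))

end Term

open Term

/-- The constants case of Lemma 1 of the paper: let `t` be a term with exactly `k ≥ 0`
variables and let `c₁, …, c_k` be pairwise distinct constants not occurring in `t`.
Then some ground instance `tθ` of `t` is not unifiable with any term `s` such that
(i) `t` is not an instance of `s` and (ii) none of `c₁, …, c_k` occurs in `s`. -/
theorem ground_instance_not_unifiable_const {F V : Type*} (ar : F → ℕ)
    (t : Term F ar V) (k : ℕ)
    (hfin : {v : V | t.VarOccurs v}.Finite)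
    (hk : {v : V | t.VarOccurs v}.ncard = k)
    (c : Fin k → F) (hcar : ∀ i, ar (c i) = 0) (hcinj : Function.Injective c)
    (hcnot : ∀ i, ¬ t.FuncOccurs (c i)) :
    ∃ θ : V → Term F ar V, (t.subst θ).Ground ∧
      ∀ s : Term F ar V,
        (¬ ∃ ρ : V → Term F ar V, s.subst ρ = t) →
        (∀ i, ¬ s.FuncOccurs (c i)) →
        ¬ ∃ σ : V → Term F ar V, (t.subst θ).subst σ = s.subst σ := by
  classical
  have := hfin.to_subtype
  let E : {v | t.VarOccurs v} ≃ Fin k :=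
    Finite.equivFinOfCardEq (by rw [← hk, Nat.card_coe_set_eq])
  let θ : V → Term F ar V := fun v =>
    if h : t.VarOccurs v then const (c (E ⟨v, h⟩)) (hcar _) else .var v
  let e : F → Option V := fun f => (Function.partialInv c f).map fun i => (E.symm i : V)
  have hθ : ∀ v, t.VarOccurs v → (θ v).Ground := fun v h => by
    simpa only [θ, dif_pos h] using ground_const _ _
  have hθe : ∀ v, t.VarOccurs v → (θ v).abstract e = .var v := fun v h => by
    simp only [θ, dif_pos h]
    exact abstract_const _ (by simp [e, Function.partialInv_left hcinj])
  have he : ∀ u : Term F ar V, (∀ i, ¬ u.FuncOccurs (c i)) → ∀ f, u.FuncOccurs f → e f = none := by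
    intro u hu f hf
    cases hpf : Function.partialInv c f with
    | none => simp [e, hpf]
    | some i => exact absurd ((hcinj.isPartialInv i f).mp hpf ▸ hf) (hu i)
  refine ⟨θ, ground_subst hθ, fun s hts hcs ⟨σ, hσ⟩ => hts ⟨fun v => (σ v).abstract e, ?_⟩⟩
  rw [(ground_subst hθ).subst_eq] at hσ
  calc s.subst (fun v => (σ v).abstract e)
      = (s.subst σ).abstract e := (abstract_subst (he s hcs) σ).symm
    _ = (t.subst θ).abstract e := by rw [hσ]
    _ = t.subst fun v => (θ v).abstract e := abstract_subst (he t hcnot) θ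
    _ = t := subst_eq_self hθe
end

section
/- Let U be the inductive type with constructors nil : U, cons : U → U → U, and const : K → U for an arbitrary index type K (the Herbrand universe of a language with the list constructors and possibly further constants). Define isList : U → Prop inductively by: isList nil, and isList (cons h t) whenever isList t; define membership mem e u by: mem e (cons h t) iff e = h or mem e t (and mem e u is false otherwise). Let the atom type be A = U × U, an atom (e, u) being written m(e, u). Consider the ground positive program M consisting of: the facts (m(e, cons e t), ∅) for all e, t ∈ U, and the clauses (m(e, cons h t), {m(e, t)}) for all e, h, t ∈ U. Let r = {m(e, u) | isList u and mem e u} and r₊ = r ∪ {m(e, u) | ¬ isList u}. Then r ⊆ M_M ⊆ r₊, i.e. the program M is correct and complete w.r.t. the approximate specification (r, r₊). -/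
/-- Immediate consequence operator of a ground positive program. -/
def Tq {A : Type*} (Q : Set (A × Finset A)) : Set A →o Set A where
  toFun J := {h | ∃ pos : Finset A, (h, pos) ∈ Q ∧ ↑pos ⊆ J}
  monotone' := by
    intro J K hJK h hh
    obtain ⟨pos, hm, hs⟩ := hh
    exact ⟨pos, hm, hs.trans hJK⟩

/-- Least Herbrand model of a ground positive program: the least fixed point of its
immediate consequence operator. -/
def leastModel {A : Type*} (Q : Set (A × Finset A)) : Set A := OrderHom.lfp (Tq Q)

/-- The Herbrand universe of a language with `nil`, binary `cons`, and additional
constants indexed by `K`. -/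
inductive U (K : Type*) where
  | nil : U K
  | cons : U K → U K → U K
  | const : K → U K

/-- `isList u` holds iff `u` is a list `[e₁, …, e_n]`. -/
inductive isList {K : Type*} : U K → Prop
  | nil : isList U.nil
  | cons (h t : U K) : isList t → isList (U.cons h t)

/-- `Mem e u`: `e` is a member of `u`; it holds for `u = cons h t` iff `e = h` or
`Mem e t`, and never holds otherwise. -/
inductive Mem {K : Type*} (e : U K) : U K → Prop
  | head (t : U K) : Mem e (U.cons e t)
  | tail (h t : U K) : Mem e t → Mem e (U.cons h t)

/-- The ground instantiation of the list membership program
`{ m(E,[E|_]).  m(E,[_|T]) ← m(E,T). }`; an atom `m(e,u)` is the pair `(e,u)`. -/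
def MemProg (K : Type*) : Set ((U K × U K) × Finset (U K × U K)) :=
  {cl | ∃ e t, cl = ((e, U.cons e t), ∅)} ∪
  {cl | ∃ e h t, cl = ((e, U.cons h t), {(e, t)})}

/-!
The least model of the membership program is exactly the relation `Mem`: the fact and the rule
are the two constructors of `Mem`, so `Mem` is closed under the immediate consequence operator,
and every instance of a constructor is derived by a clause. Then `r ⊆ Mem ⊆ r₊`.
-/

section LeastModel

variable {A : Type*} {Q : Set (A × Finset A)}

theorem mem_leastModel_of_body_subset {h : A} {pos : Finset A} (hQ : (h, pos) ∈ Q)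
    (hpos : ↑pos ⊆ leastModel Q) : h ∈ leastModel Q := by
  rw [leastModel, ← OrderHom.map_lfp]
  exact ⟨pos, hQ, hpos⟩

theorem leastModel_subset_of_Tq_subset {S : Set A} (hS : Tq Q S ⊆ S) : leastModel Q ⊆ S :=
  OrderHom.lfp_le _ hS

end LeastModel

theorem Tq_memProg_subset_mem (K : Type*) :
    Tq (MemProg K) {a | Mem a.1 a.2} ⊆ {a | Mem a.1 a.2} := by
  rintro a ⟨pos, ⟨e, t, hcl⟩ | ⟨e, h, t, hcl⟩, hpos⟩
  · obtain ⟨rfl, rfl⟩ := Prod.mk.inj hcl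
    exact Mem.head t
  · obtain ⟨rfl, rfl⟩ := Prod.mk.inj hcl
    exact Mem.tail h t (hpos (Finset.mem_coe.2 (Finset.mem_singleton_self _)))

theorem leastModel_memProg (K : Type*) : leastModel (MemProg K) = {a | Mem a.1 a.2} := by
  refine subset_antisymm (leastModel_subset_of_Tq_subset (Tq_memProg_subset_mem K)) ?_
  rintro ⟨e, u⟩ (hm : Mem e u)
  induction hm with
  | head t => exact mem_leastModel_of_body_subset (Or.inl ⟨e, t, rfl⟩) (by simp)
  | tail h t _ ih =>
    exact mem_leastModel_of_body_subset (Or.inr ⟨e, h, t, rfl⟩) (by simpa using ih)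

/-- Examples 1 and 2 of the paper: the membership program is correct and complete
w.r.t. the approximate specification `(r, r₊)`, i.e. `r ⊆ M_M ⊆ r₊`. -/
theorem memProg_fully_correct (K : Type*) :
    {a : U K × U K | isList a.2 ∧ Mem a.1 a.2} ⊆ leastModel (MemProg K) ∧
    leastModel (MemProg K) ⊆
      {a : U K × U K | isList a.2 ∧ Mem a.1 a.2} ∪ {a : U K × U K | ¬ isList a.2} := by
  rw [leastModel_memProg]
  refine ⟨fun a ha => ha.2, fun a ha => ?_⟩
  by_cases hl : isList a.2
  exacts [Or.inl ⟨hl, ha⟩, Or.inr hl]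
end
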